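/- In the lattice of flats K = (F, ⊆) of a Faigle geometry (P, F), semimodularity holds: if X, Y ∈ F, Z := X ∩ Y ≺ X, and U := cl(X ∪ Y), then Y ≺ U. -/

import Mathlib

/-!
Since `X ∩ Y ≺ X`, the set `X \ Y` is nonempty; take a minimal element `u` of it. As `X` is a
down-set, `⇓u ⊆ Y`, so the covering property gives a flat `W` with `u ∈ W` and `Y ≺ W`. The flat
`X ∩ W` lies strictly above `X ∩ Y` (it contains `u`) and inside `X`, hence equals `X`; so
`X ∪ Y ⊆ W` and `Y ⊂ cl(X ∪ Y) ⊆ W`, which forces `Y ≺ cl(X ∪ Y)`.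
-/

/-- `X` is a down-set of the poset `P`. -/
def IsDownSet {P : Type*} [PartialOrder P] (X : Set P) : Prop :=
  ∀ ⦃x⦄, x ∈ X → ∀ ⦃y⦄, y ≤ x → y ∈ X

/-- `Y` covers `X` in the poset `(F, ⊆)`. -/
def CoversIn {P : Type*} (F : Set (Set P)) (X Y : Set P) : Prop :=
  X ⊂ Y ∧ ∀ Z ∈ F, ¬(X ⊂ Z ∧ Z ⊂ Y)

/-- The closure operator associated to the closure system `F`:
`cl(X) = ⋂ {Y ∈ F : X ⊆ Y}`. -/
def clF {P : Type*} (F : Set (Set P)) (X : Set P) : Set P :=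
  ⋂₀ {Y | Y ∈ F ∧ X ⊆ Y}

/-- `(P, F)` is a Faigle geometry. -/
structure IsFaigle {P : Type*} [PartialOrder P] [Finite P] (F : Set (Set P)) : Prop where
  univ_mem : Set.univ ∈ F
  inter_mem : ∀ X ∈ F, ∀ Y ∈ F, X ∩ Y ∈ F
  down : ∀ X ∈ F, IsDownSet X
  empty_mem : ∅ ∈ F
  Iic_mem : ∀ u : P, Set.Iic u ∈ F
  Iio_mem : ∀ u : P, Set.Iio u ∈ F
  cp : ∀ (u : P), ∀ X ∈ F, u ∉ X → Set.Iio u ⊆ X →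
      ∃ Y ∈ F, u ∈ Y ∧ CoversIn F X Y

section Closure

variable {P : Type*} {F : Set (Set P)}

lemma subset_clF (F : Set (Set P)) (S : Set P) : S ⊆ clF F S :=
  fun _ hx _ hW => hW.2 hx

lemma clF_subset {S W : Set P} (hW : W ∈ F) (h : S ⊆ W) : clF F S ⊆ W :=
  Set.sInter_subset_of_mem ⟨hW, h⟩

end Closure

namespace CoversIn

variable {P : Type*} {F : Set (Set P)} {X Y : Set P}

lemma eq_of_mem {V : Set P} (h : CoversIn F X Y) (hV : V ∈ F) (hXV : X ⊂ V) (hVY : V ⊆ Y) :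
    V = Y := by
  by_contra hne
  exact h.2 V hV ⟨hXV, hVY.ssubset_of_ne hne⟩

lemma of_ssubset_of_subset {U : Set P} (h : CoversIn F X Y) (hXU : X ⊂ U) (hUY : U ⊆ Y) :
    CoversIn F X U :=
  ⟨hXU, fun Z hZ ⟨hXZ, hZU⟩ => h.2 Z hZ ⟨hXZ, hZU.trans_subset hUY⟩⟩

end CoversIn

lemma IsDownSet.exists_mem_diff_Iio_subset {P : Type*} [PartialOrder P] [WellFoundedLT P]
    {X Y : Set P} (hX : IsDownSet X) (hXY : (X \ Y).Nonempty) :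
    ∃ u ∈ X \ Y, Set.Iio u ⊆ Y := by
  obtain ⟨u, ⟨huX, huY⟩, hmin⟩ := wellFounded_lt.has_min (X \ Y) hXY
  refine ⟨u, ⟨huX, huY⟩, fun v hv => ?_⟩
  by_contra hvY
  exact hmin v ⟨hX huX hv.le, hvY⟩ hv

/-- Semimodularity of the lattice of flats: if `Z := X ∩ Y` (the meet) covers
nothing between itself and `X`, i.e. `X ∩ Y ≺ X`, then `Y ≺ cl(X ∪ Y)` (the join). -/
theorem flats_semimodular {P : Type*} [PartialOrder P] [Finite P]
    {F : Set (Set P)} (hF : IsFaigle F) {X Y : Set P} (hX : X ∈ F) (hY : Y ∈ F)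
    (hcov : CoversIn F (X ∩ Y) X) :
    CoversIn F Y (clF F (X ∪ Y)) := by
  have hXY : (X \ Y).Nonempty := by
    obtain ⟨x, hxX, hxXY⟩ := Set.exists_of_ssubset hcov.1
    exact ⟨x, hxX, fun hxY => hxXY ⟨hxX, hxY⟩⟩
  obtain ⟨u, ⟨huX, huY⟩, hIio⟩ := (hF.down X hX).exists_mem_diff_Iio_subset hXY
  obtain ⟨W, hW, huW, hYW⟩ := hF.cp u Y hY huY hIio
  have hXW : X ⊆ W := by
    have hXYW : X ∩ Y ⊂ X ∩ W :=
      Set.ssubset_iff_of_subset (Set.inter_subset_inter_right X hYW.1.subset) |>.2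
        ⟨u, ⟨huX, huW⟩, fun hu => huY hu.2⟩
    exact Set.inter_eq_left.1 (hcov.eq_of_mem (hF.inter_mem X hX W hW) hXYW Set.inter_subset_left)
  have hYU : Y ⊂ clF F (X ∪ Y) :=
    Set.ssubset_iff_of_subset (Set.subset_union_right.trans (subset_clF F _)) |>.2
      ⟨u, subset_clF F _ (Or.inl huX), huY⟩
  exact hYW.of_ssubset_of_subset hYU (clF_subset hW (Set.union_subset hXW hYW.1.subset))
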